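/- arXiv:2601.05228 — 3 statements merged into one kernel-verified Lean document; each statement's English description precedes it below -/
import Mathlib

section
/- Let f : ℝ → ℝ be continuous, and let Ω : ℝ × ℝ → ℝ be continuously differentiable with Ω(x,x) = 0 for all x and VE(Ω) = f, i.e., ∂_y Ω(x,y)|_{y=x} = f(x) for all x. Let a < b. Then for every ε > 0 there exists δ > 0 such that for every partition a = x_0 < x_1 < ⋯ < x_k = b with mesh max_i (x_{i+1} − x_i) < δ, one has |Σ_{i=0}^{k−1} Ω(x_i, x_{i+1}) − ∫_a^b f(x) dx| < ε. In particular the Riemann-like sums Σ_i Ω(x_i,x_{i+1}) converge to ∫_a^b f as the mesh tends to 0. -/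
/-! Since `Ω (x, x) = 0`, the fundamental theorem of calculus gives
`Ω (c, d) = ∫ t in c..d, ∂₂Ω (c, t)`, while `VE(Ω) = f` says `f t = ∂₂Ω (t, t)`. By uniform
continuity of `∂₂Ω` on `[a, b]²` these two integrands differ by less than `η` once `d - c < δ`,
so each term `Ω (xᵢ, xᵢ₊₁)` is within `η (xᵢ₊₁ - xᵢ)` of `∫ t in xᵢ..xᵢ₊₁, f t`, and the errors
add up to at most `η (b - a)`. -/

open Set intervalIntegral

theorem Fin.sum_univ_succ_sub_castSucc {M : Type*} [AddCommGroup M] {n : ℕ}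
    (f : Fin (n + 1) → M) :
    ∑ i : Fin n, (f i.succ - f i.castSucc) = f (Fin.last n) - f 0 := by
  induction n with
  | zero => simp
  | succ n ih =>
    rw [Fin.sum_univ_castSucc]
    simp only [Fin.succ_castSucc]
    rw [ih fun i => f i.castSucc, Fin.succ_last, Fin.castSucc_zero]
    abel

theorem IsCompact.exists_forall_dist_apply_diag_lt {α β : Type*} [PseudoMetricSpace α]
    [PseudoMetricSpace β] {K : Set α} (hK : IsCompact K) {F : α × α → β} (hF : Continuous F)
    {η : ℝ} (hη : 0 < η) :
    ∃ δ > 0, ∀ s ∈ K, ∀ t ∈ K, dist s t < δ → dist (F (s, t)) (F (t, t)) < η := by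
  obtain ⟨δ, hδ, hF⟩ := Metric.uniformContinuousOn_iff.mp
    ((hK.prod hK).uniformContinuousOn_of_continuous hF.continuousOn) η hη
  refine ⟨δ, hδ, fun s hs t ht hst => hF _ ⟨hs, ht⟩ _ ⟨ht, ht⟩ ?_⟩
  simpa [Prod.dist_eq] using hst

variable {E : Type*} [NormedAddCommGroup E] [NormedSpace ℝ E]

theorem norm_sum_sub_integral_le_of_forall_le {f : ℝ → E} (hf : Continuous f) {φ : ℝ × ℝ → E}
    {η : ℝ} {k : ℕ} (x : Fin (k + 1) → ℝ)
    (h : ∀ i : Fin k, ‖φ (x i.castSucc, x i.succ) - ∫ t in x i.castSucc..x i.succ, f t‖ ≤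
      η * (x i.succ - x i.castSucc)) :
    ‖∑ i : Fin k, φ (x i.castSucc, x i.succ) - ∫ t in x 0..x (Fin.last k), f t‖ ≤
      η * (x (Fin.last k) - x 0) := by
  have hsplit : ∫ t in x 0..x (Fin.last k), f t =
      ∑ i : Fin k, ∫ t in x i.castSucc..x i.succ, f t := by
    have hsub (c d : ℝ) : ∫ t in c..d, f t = (∫ t in x 0..d, f t) - ∫ t in x 0..c, f t :=
      (integral_interval_sub_left (hf.intervalIntegrable _ _) (hf.intervalIntegrable _ _)).symm
    rw [Finset.sum_congr rfl fun i _ => hsub _ _,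
      Fin.sum_univ_succ_sub_castSucc (fun j => ∫ t in x 0..x j, f t), integral_same, sub_zero]
  calc _ = ‖∑ i : Fin k, (φ (x i.castSucc, x i.succ) - ∫ t in x i.castSucc..x i.succ, f t)‖ := by
        rw [hsplit, Finset.sum_sub_distrib]
    _ ≤ ∑ i : Fin k, η * (x i.succ - x i.castSucc) := norm_sum_le_of_le _ fun i _ => h i
    _ = η * (x (Fin.last k) - x 0) := by rw [← Finset.mul_sum, Fin.sum_univ_succ_sub_castSucc]

noncomputable def partialDerivSnd (Ω : ℝ × ℝ → E) (p : ℝ × ℝ) : E := fderiv ℝ Ω p (0, 1)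

theorem hasDerivAt_partialDerivSnd {Ω : ℝ × ℝ → E} (hΩ : Differentiable ℝ Ω) (x y : ℝ) :
    HasDerivAt (fun y => Ω (x, y)) (partialDerivSnd Ω (x, y)) y :=
  (hΩ (x, y)).hasFDerivAt.comp_hasDerivAt y ((hasDerivAt_const y x).prodMk (hasDerivAt_id y))

theorem continuous_partialDerivSnd {Ω : ℝ × ℝ → E} (hΩ : ContDiff ℝ 1 Ω) :
    Continuous (partialDerivSnd Ω) :=
  (hΩ.continuous_fderiv one_ne_zero).clm_apply continuous_const

theorem eq_integral_partialDerivSnd [CompleteSpace E] {Ω : ℝ × ℝ → E} (hΩ : ContDiff ℝ 1 Ω)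
    (hdiag : ∀ x, Ω (x, x) = 0) (c d : ℝ) :
    Ω (c, d) = ∫ t in c..d, partialDerivSnd Ω (c, t) := by
  rw [integral_eq_sub_of_hasDerivAt
    (fun t _ => hasDerivAt_partialDerivSnd (hΩ.differentiable one_ne_zero) c t)
    (((continuous_partialDerivSnd hΩ).comp₂ continuous_const continuous_id').intervalIntegrable
      _ _),
    hdiag, sub_zero]

theorem norm_sub_integral_partialDerivSnd_diag_le [CompleteSpace E] {Ω : ℝ × ℝ → E}
    (hΩ : ContDiff ℝ 1 Ω) (hdiag : ∀ x, Ω (x, x) = 0) {c d η : ℝ} (hcd : c ≤ d)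
    (hclose : ∀ t ∈ Icc c d, ‖partialDerivSnd Ω (c, t) - partialDerivSnd Ω (t, t)‖ ≤ η) :
    ‖Ω (c, d) - ∫ t in c..d, partialDerivSnd Ω (t, t)‖ ≤ η * (d - c) := by
  have hF := continuous_partialDerivSnd hΩ
  rw [eq_integral_partialDerivSnd hΩ hdiag,
    ← integral_sub ((hF.comp₂ continuous_const continuous_id').intervalIntegrable _ _)
      ((hF.comp₂ continuous_id' continuous_id').intervalIntegrable _ _)]
  calc _ ≤ η * |d - c| := norm_integral_le_of_norm_le_const fun t ht =>
        hclose t (Ioc_subset_Icc_self (uIoc_of_le hcd ▸ ht))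
    _ = η * (d - c) := by rw [abs_of_nonneg (sub_nonneg.mpr hcd)]

theorem riemann_like_sums_converge_to_integral_general
    (f : ℝ → ℝ)
    (Ω : ℝ × ℝ → ℝ) (hΩ : ContDiff ℝ 1 Ω)
    (hdiag : ∀ x : ℝ, Ω (x, x) = 0)
    (hVE : ∀ x : ℝ, deriv (fun y => Ω (x, y)) x = f x)
    (a b : ℝ) :
    ∀ ε > 0, ∃ δ > 0, ∀ (k : ℕ) (x : Fin (k + 1) → ℝ),
      StrictMono x → x 0 = a → x (Fin.last k) = b →
      (∀ i : Fin k, x i.succ - x i.castSucc < δ) →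
      |(∑ i : Fin k, Ω (x i.castSucc, x i.succ)) - ∫ t in a..b, f t| < ε := by
  obtain rfl : f = fun t => partialDerivSnd Ω (t, t) := funext fun t =>
    (hVE t).symm.trans (hasDerivAt_partialDerivSnd (hΩ.differentiable one_ne_zero) t t).deriv
  have hF := continuous_partialDerivSnd hΩ
  intro ε hε
  set η := ε / (|b - a| + 1)
  obtain ⟨δ, hδ, hclose⟩ :=
    (isCompact_Icc (a := a) (b := b)).exists_forall_dist_apply_diag_lt hF (by positivity : 0 < η)
  refine ⟨δ, hδ, fun k x hx h0 hlast hmesh => ?_⟩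
  have hmem (i) : x i ∈ Icc a b :=
    ⟨h0 ▸ hx.monotone (Fin.zero_le i), hlast ▸ hx.monotone (Fin.le_last i)⟩
  have hlocal (i : Fin k) : ‖Ω (x i.castSucc, x i.succ) -
      ∫ t in x i.castSucc..x i.succ, partialDerivSnd Ω (t, t)‖ ≤ η * (x i.succ - x i.castSucc) :=
    norm_sub_integral_partialDerivSnd_diag_le hΩ hdiag
      (hx.monotone (Fin.castSucc_lt_succ (i := i)).le) fun t ht => by
        rw [← dist_eq_norm]
        refine (hclose _ (hmem _) t ⟨(hmem _).1.trans ht.1, ht.2.trans (hmem _).2⟩ ?_).le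
        rw [Real.dist_eq, abs_of_nonpos (by linarith [ht.1])]
        linarith [ht.2, hmesh i]
  have hsum := norm_sum_sub_integral_le_of_forall_le (hF.comp₂ continuous_id' continuous_id')
    (φ := Ω) x hlocal
  rw [h0, hlast, Real.norm_eq_abs] at hsum
  calc _ ≤ η * (b - a) := hsum
    _ ≤ η * |b - a| := by gcongr; exact le_abs_self _
    _ < ε := by
      rw [div_mul_eq_mul_div, div_lt_iff₀ (by positivity)]
      linarith

/-- one-dimensional Part 0 of the main theorem. If `f` is continuous and
`Ω : ℝ × ℝ → ℝ` is a continuously differentiable normalized `1`-cochain with `VE(Ω) = f`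
(i.e. `Ω(x,x) = 0` and `∂_y Ω(x,y)|_{y=x} = f(x)`), then for `a < b` the Riemann-like sums
`Σ_i Ω(x_i, x_{i+1})` over partitions of `[a,b]` converge to `∫_a^b f` as the mesh tends to `0`. -/
theorem riemann_like_sums_converge_to_integral
    (f : ℝ → ℝ) (hf : Continuous f)
    (Ω : ℝ × ℝ → ℝ) (hΩ : ContDiff ℝ 1 Ω)
    (hdiag : ∀ x : ℝ, Ω (x, x) = 0)
    (hVE : ∀ x : ℝ, deriv (fun y => Ω (x, y)) x = f x)
    (a b : ℝ) (hab : a < b) :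
    ∀ ε > 0, ∃ δ > 0, ∀ (k : ℕ) (x : Fin (k + 1) → ℝ),
      StrictMono x → x 0 = a → x (Fin.last k) = b →
      (∀ i : Fin k, x i.succ - x i.castSucc < δ) →
      |(∑ i : Fin k, Ω (x i.castSucc, x i.succ)) - ∫ t in a..b, f t| < ε :=
  riemann_like_sums_converge_to_integral_general f Ω hΩ hdiag hVE a b
end

section
/- Let n ≥ 1 and let Ω : (ℝⁿ)^{n+1} → ℝ be smooth and normalized, i.e., Ω(x_0, x_1, …, x_n) = 0 whenever x_i = x_0 for some 1 ≤ i ≤ n. Fix x ∈ ℝⁿ and let Ω_x : (ℝⁿ)ⁿ → ℝ be given by Ω_x(y_1,…,y_n) = Ω(x, y_1, …, y_n). Then every partial derivative of Ω_x of total order at most n − 1, evaluated at the diagonal point (x, x, …, x), vanishes; equivalently, the k-th iterated Fréchet derivative of Ω_x at (x,…,x) is zero for every 0 ≤ k ≤ n − 1. -/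
section Aux

variable {𝕜 : Type*} [NontriviallyNormedField 𝕜] {E F' : Type*} [NormedAddCommGroup E]
  [NormedSpace 𝕜 E] [NormedAddCommGroup F'] [NormedSpace 𝕜 F']

lemma fderiv_comp_add_right_aux (g : E → F') (b z₀ : E) :
    fderiv 𝕜 (fun z => g (z + b)) z₀ = fderiv 𝕜 g (z₀ + b) := by
  by_cases h : DifferentiableAt 𝕜 g (z₀ + b)
  · have h1 : HasFDerivAt (fun z : E => z + b) (ContinuousLinearMap.id 𝕜 E) z₀ :=
      (hasFDerivAt_id z₀).add_const b
    have h2 := (h.hasFDerivAt.comp z₀ h1).fderiv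
    exact h2
  · rw [fderiv_zero_of_not_differentiableAt h, fderiv_zero_of_not_differentiableAt]
    intro hd
    apply h
    have hd' : DifferentiableAt 𝕜 (fun z => g (z + b)) ((z₀ + b) - b) := by
      simpa using hd
    have hsub : DifferentiableAt 𝕜 (fun w : E => w - b) (z₀ + b) :=
      differentiableAt_id.sub_const b
    have hcomp : DifferentiableAt 𝕜 ((fun z => g (z + b)) ∘ fun w : E => w - b) (z₀ + b) :=
      DifferentiableAt.comp (z₀ + b) hd' hsub
    have heq : ((fun z => g (z + b)) ∘ fun w : E => w - b) = g := by
      funext w; simp [Function.comp]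
    rwa [heq] at hcomp

lemma iteratedFDeriv_comp_add_right_aux (i : ℕ) (g : E → F') (b : E) :
    iteratedFDeriv 𝕜 i (fun z => g (z + b)) = fun z₀ => iteratedFDeriv 𝕜 i g (z₀ + b) := by
  induction i with
  | zero =>
    funext z₀
    ext m
    simp [iteratedFDeriv_zero_apply]
  | succ i IH =>
    funext z₀
    ext m
    rw [iteratedFDeriv_succ_apply_left, iteratedFDeriv_succ_apply_left, IH,
      fderiv_comp_add_right_aux (iteratedFDeriv 𝕜 i g) b z₀]

end Aux

/-- If `Ω : (ℝⁿ)^{n+1} → ℝ` is smooth and normalized (vanishing whenever one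
of the last `n` arguments equals the zeroth one), then for each `x ∈ ℝⁿ` the restricted map
`Ω_x(y_1,…,y_n) := Ω(x,y_1,…,y_n)` has vanishing iterated (Fréchet) derivatives of every order
`k ≤ n − 1` at the diagonal point `(x,…,x)`. -/
theorem normalized_cochain_lower_order_derivatives_vanish
    (n : ℕ) (hn : 1 ≤ n) (Ω : (Fin (n + 1) → (Fin n → ℝ)) → ℝ)
    (hsmooth : ContDiff ℝ (⊤ : ℕ∞) Ω)
    (hnorm : ∀ x : Fin (n + 1) → (Fin n → ℝ),
      (∃ i : Fin (n + 1), i ≠ 0 ∧ x i = x 0) → Ω x = 0)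
    (x : Fin n → ℝ) :
    ∀ k : ℕ, k ≤ n - 1 →
      iteratedFDeriv ℝ k (fun y : Fin n → (Fin n → ℝ) => Ω (Fin.cons x y))
        (fun _ => x) = 0 := by
  intro k hk
  set E := Fin n → (Fin n → ℝ)
  set F : E → ℝ := fun y => Ω (Fin.cons x y) with hFdef
  set c : E := fun _ => x with hcdef
  -- smoothness of the cons map
  have hcons : ContDiff ℝ (⊤ : ℕ∞) (fun y : E => (Fin.cons x y : Fin (n + 1) → Fin n → ℝ)) := by
    apply contDiff_pi.2
    intro i
    refine Fin.cases ?_ ?_ i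
    · simpa using (contDiff_const : ContDiff ℝ (⊤ : ℕ∞) fun _ : E => x)
    · intro j
      simpa using (contDiff_apply (𝕜 := ℝ) (E := Fin n → ℝ) (n := (⊤ : ℕ∞)) j)
  have hF : ContDiff ℝ (⊤ : ℕ∞) F := hsmooth.comp hcons
  have hkn : k < n := lt_of_le_of_lt hk (Nat.sub_lt (lt_of_lt_of_le Nat.zero_lt_one hn) Nat.one_pos)
  -- the key vanishing: composing with a projection killing some block
  ext m
  have hdecomp : ∀ j : Fin k, m j = ∑ i : Fin n, Pi.single i (m j i) := by
    intro j; exact (Finset.univ_sum_single (m j)).symm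
  have hm : iteratedFDeriv ℝ k F c m
      = ∑ r : Fin k → Fin n, iteratedFDeriv ℝ k F c (fun j => Pi.single (r j) (m j (r j))) := by
    calc iteratedFDeriv ℝ k F c m
        = iteratedFDeriv ℝ k F c (fun j => ∑ i : Fin n, Pi.single i (m j i)) := by
          congr 1; funext j; exact hdecomp j
      _ = ∑ r : Fin k → Fin n, iteratedFDeriv ℝ k F c (fun j => Pi.single (r j) (m j (r j))) :=
          (iteratedFDeriv ℝ k F c).map_sum (g := fun j i => Pi.single i (m j i))
  rw [hm]
  apply Finset.sum_eq_zero
  intro r _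
  -- choose a block not hit by r
  have hns : ¬ Function.Surjective r := by
    intro hs
    have := Fintype.card_le_of_surjective r hs
    simp only [Fintype.card_fin] at this
    omega
  rw [Function.Surjective] at hns
  push_neg at hns
  obtain ⟨i₀, hi₀⟩ := hns
  -- projection killing block i₀
  set P : E →L[ℝ] E :=
    ContinuousLinearMap.pi (fun i => if i = i₀ then 0 else ContinuousLinearMap.proj i) with hPdef
  have hPapply : ∀ (u : E) (i : Fin n), P u i = if i = i₀ then 0 else u i := by
    intro u i
    rw [hPdef, ContinuousLinearMap.pi_apply]
    split_ifs with h <;> rfl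
  set b : E := Pi.single i₀ x with hbdef
  set G : E → ℝ := fun z => F (z + b) with hGdef
  have hG : ContDiff ℝ (⊤ : ℕ∞) G := hF.comp (contDiff_id.add contDiff_const)
  -- G ∘ P is identically zero
  have hGP : (G ∘ P) = fun _ : E => (0 : ℝ) := by
    funext z
    have hval : (P z + b) i₀ = x := by
      rw [hbdef, Pi.add_apply, hPapply]
      simp
    apply hnorm
    refine ⟨Fin.succ i₀, Fin.succ_ne_zero i₀, ?_⟩
    simp [Fin.cons_succ, Fin.cons_zero, hval]
  have hiter : iteratedFDeriv ℝ k (G ∘ P) c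
      = (iteratedFDeriv ℝ k G (P c)).compContinuousLinearMap (fun _ => P) :=
    P.iteratedFDeriv_comp_right hG c (by exact_mod_cast le_top)
  have hGzero : iteratedFDeriv ℝ k (G ∘ P) c = 0 := by
    rw [hGP, iteratedFDeriv_zero_fun]; rfl
  have hGc : iteratedFDeriv ℝ k G (P c) = iteratedFDeriv ℝ k F c := by
    have := congrFun (iteratedFDeriv_comp_add_right_aux (𝕜 := ℝ) k F b) (P c)
    rw [hGdef, this]
    congr 1
    funext i
    rw [hbdef, Pi.add_apply, hPapply]
    by_cases h : i = i₀
    · subst h; simp [hcdef]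
    · simp [h, Pi.single_eq_of_ne h, hcdef]
  have hzero : (iteratedFDeriv ℝ k F c).compContinuousLinearMap (fun _ => P) = 0 := by
    rw [← hGc, ← hiter, hGzero]
  have happ := DFunLike.congr_fun hzero (fun j => Pi.single (r j) (m j (r j)))
  simp only [ContinuousMultilinearMap.compContinuousLinearMap_apply,
    ContinuousMultilinearMap.zero_apply] at happ
  have hfix : ∀ j : Fin k, P (Pi.single (r j) (m j (r j))) = Pi.single (r j) (m j (r j)) := by
    intro j
    funext i
    by_cases h : i = i₀
    · subst h
      rw [hPapply]
      simp [Pi.single_eq_of_ne (Ne.symm (hi₀ j))]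
    · simp [hPapply, h]
  calc iteratedFDeriv ℝ k F c (fun j => Pi.single (r j) (m j (r j)))
      = iteratedFDeriv ℝ k F c (fun j => P (Pi.single (r j) (m j (r j)))) := by
        congr 1; funext j; rw [hfix j]
    _ = 0 := happ
end

section
/- Let m ≥ 1 and let Ω : ℝᵐ × ℝᵐ → ℝ be continuously differentiable and satisfy the cocycle identity Ω(x,z) = Ω(x,y) + Ω(y,z) for all x, y, z ∈ ℝᵐ. Define the 1-form ω on ℝᵐ by ω_x(v) := (d/dt)|_{t=0} Ω(x, x + t·v). Then for every continuously differentiable path γ : [a,b] → ℝᵐ and every partition a = t_0 < t_1 < ⋯ < t_k = b, Σ_{i=0}^{k−1} Ω(γ(t_i), γ(t_{i+1})) = Ω(γ(a), γ(b)) = ∫_a^b ω_{γ(t)}(γ′(t)) dt. -/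
/-! A cocycle on a pair groupoid is a coboundary: fixing a base point `o`, the function
`g := Ω(o, ·)` satisfies `Ω(x, y) = g y - g x`. Hence the Riemann-like sum telescopes to
`Ω(γ a, γ b)`, and the van Est form is `ω_x = dg_x`, so by the fundamental theorem of calculus
`∫ ω_γ(γ') = ∫ (g ∘ γ)' = g (γ b) - g (γ a)`. -/

open Set intervalIntegral

def IsPairCocycle {α G : Type*} [AddCommGroup G] (Ω : α × α → G) : Prop :=
  ∀ x y z : α, Ω (x, z) = Ω (x, y) + Ω (y, z)

namespace IsPairCocycle

variable {α G : Type*} [AddCommGroup G] {Ω : α × α → G}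

theorem sum_castSucc_succ (hΩ : IsPairCocycle Ω) {k : ℕ} (x : Fin (k + 1) → α) :
    ∑ i : Fin k, Ω (x i.castSucc, x i.succ) = Ω (x 0, x (Fin.last k)) := by
  induction k with
  | zero => simpa using (left_eq_add.mp (hΩ (x 0) (x 0) (x 0))).symm
  | succ k ih =>
    rw [Fin.sum_univ_castSucc, hΩ (x 0) (x (Fin.last k).castSucc)]
    simpa using ih (x ∘ Fin.castSucc)

theorem eq_sub (hΩ : IsPairCocycle Ω) (o x y : α) : Ω (x, y) = Ω (o, y) - Ω (o, x) :=
  eq_sub_of_add_eq' (hΩ o x y).symm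

theorem hasDerivAt_add_smul {E F : Type*} [NormedAddCommGroup E] [NormedSpace ℝ E]
    [NormedAddCommGroup F] [NormedSpace ℝ F] {Ω : E × E → F} (hΩ : IsPairCocycle Ω) {o x : E}
    (hg : DifferentiableAt ℝ (fun y => Ω (o, y)) x) (v : E) :
    HasDerivAt (fun u : ℝ => Ω (x, x + u • v)) (fderiv ℝ (fun y => Ω (o, y)) x v) 0 := by
  have hline : HasDerivAt (fun u : ℝ => x + u • v) v 0 := by
    simpa using ((hasDerivAt_id (0 : ℝ)).smul_const v).const_add x
  have hg' : HasFDerivAt (fun y => Ω (o, y)) (fderiv ℝ (fun y => Ω (o, y)) x)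
      (x + (0 : ℝ) • v) := by
    simpa using hg.hasFDerivAt
  rw [show (fun u : ℝ => Ω (x, x + u • v)) = fun u => Ω (o, x + u • v) - Ω (o, x) from
    funext fun u => hΩ.eq_sub o _ _]
  exact (hg'.comp_hasDerivAt 0 hline).sub_const (Ω (o, x))

end IsPairCocycle

theorem integral_fderiv_comp_eq_sub {E F : Type*} [NormedAddCommGroup E] [NormedSpace ℝ E]
    [NormedAddCommGroup F] [NormedSpace ℝ F] [CompleteSpace F] {g : E → F} (hg : ContDiff ℝ 1 g)
    {γ γ' : ℝ → E} {a b : ℝ} (hγ : ∀ t ∈ uIcc a b, HasDerivAt γ (γ' t) t)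
    (hγ' : ContinuousOn γ' (uIcc a b)) :
    ∫ s in a..b, fderiv ℝ g (γ s) (γ' s) = g (γ b) - g (γ a) := by
  have hγc : ContinuousOn γ (uIcc a b) := fun s hs => (hγ s hs).continuousAt.continuousWithinAt
  have hcont : ContinuousOn (fun s => fderiv ℝ g (γ s) (γ' s)) (uIcc a b) :=
    ((hg.continuous_fderiv one_ne_zero).comp_continuousOn hγc).clm_apply hγ'
  exact integral_eq_sub_of_hasDerivAt (f := g ∘ γ) (fun s hs =>
    ((hg.differentiable one_ne_zero) (γ s)).hasFDerivAt.comp_hasDerivAt s (hγ s hs))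
    hcont.intervalIntegrable

theorem cocycle_pullback_riemann_sum_exact_general
    (m : ℕ)
    (Ω : (Fin m → ℝ) × (Fin m → ℝ) → ℝ) (hΩ : ContDiff ℝ 1 Ω)
    (hcoc : ∀ x y z : Fin m → ℝ, Ω (x, z) = Ω (x, y) + Ω (y, z))
    (a b : ℝ) (hab : a < b)
    (γ γ' : ℝ → Fin m → ℝ)
    (hγ : ∀ t ∈ Set.Icc a b, HasDerivAt γ (γ' t) t)
    (hγ' : ContinuousOn γ' (Set.Icc a b))
    (k : ℕ) (t : Fin (k + 1) → ℝ)
    (h0 : t 0 = a) (hlast : t (Fin.last k) = b) :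
    (∑ i : Fin k, Ω (γ (t i.castSucc), γ (t i.succ))) = Ω (γ a, γ b) ∧
    Ω (γ a, γ b) = ∫ s in a..b, deriv (fun u : ℝ => Ω (γ s, γ s + u • γ' s)) 0 := by
  have hcoc : IsPairCocycle Ω := hcoc
  refine ⟨by simpa [h0, hlast] using hcoc.sum_castSucc_succ (γ ∘ t), ?_⟩
  set g : (Fin m → ℝ) → ℝ := fun y => Ω (0, y)
  have hg : ContDiff ℝ 1 g := hΩ.comp (contDiff_const.prodMk contDiff_id)
  have hω : ∀ s, deriv (fun u : ℝ => Ω (γ s, γ s + u • γ' s)) 0 = fderiv ℝ g (γ s) (γ' s) :=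
    fun s => (hcoc.hasDerivAt_add_smul (hg.differentiable one_ne_zero _) _).deriv
  simp only [hω]
  rw [integral_fderiv_comp_eq_sub hg (by rwa [uIcc_of_le hab.le]) (by rwa [uIcc_of_le hab.le]),
    hcoc.eq_sub 0]

/-- If `Ω : ℝᵐ × ℝᵐ → ℝ` is a continuously differentiable cocycle on the pair
groupoid of `ℝᵐ`, with van Est image the 1-form `ω_x(v) = (d/dt)|_{t=0} Ω(x, x + t·v)`, then for
every C¹ path `γ : [a,b] → ℝᵐ` and every partition `a = t_0 < ⋯ < t_k = b`, the Riemann-like sum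
`Σ_i Ω(γ(t_i), γ(t_{i+1}))` equals `Ω(γ(a), γ(b))`, which equals `∫_a^b ω_{γ(t)}(γ′(t)) dt`. -/
theorem cocycle_pullback_riemann_sum_exact
    (m : ℕ) (hm : 1 ≤ m)
    (Ω : (Fin m → ℝ) × (Fin m → ℝ) → ℝ) (hΩ : ContDiff ℝ 1 Ω)
    (hcoc : ∀ x y z : Fin m → ℝ, Ω (x, z) = Ω (x, y) + Ω (y, z))
    (a b : ℝ) (hab : a < b)
    (γ γ' : ℝ → Fin m → ℝ)
    (hγ : ∀ t ∈ Set.Icc a b, HasDerivAt γ (γ' t) t)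
    (hγ' : ContinuousOn γ' (Set.Icc a b))
    (k : ℕ) (t : Fin (k + 1) → ℝ)
    (hmono : StrictMono t) (h0 : t 0 = a) (hlast : t (Fin.last k) = b) :
    (∑ i : Fin k, Ω (γ (t i.castSucc), γ (t i.succ))) = Ω (γ a, γ b) ∧
    Ω (γ a, γ b) = ∫ s in a..b, deriv (fun u : ℝ => Ω (γ s, γ s + u • γ' s)) 0 :=
  cocycle_pullback_riemann_sum_exact_general m Ω hΩ hcoc a b hab γ γ' hγ hγ' k t h0 hlast
end
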